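/- Correctness of the reduction from PARTITION to strong sEF1 existence: let a_1, …, a_n be positive integers with Σ_{j=1}^n a_j = 2T. Construct the MDFA instance with two identical agents, items M = {g_1, …, g_{n+2}}, two dimensions, and valuations v(g_j) = (a_j, a_j) for j ∈ [n], v(g_{n+1}) = (2T+1, 0), and v(g_{n+2}) = (0, 2T+1). Then this instance admits a strong sEF1 allocation if and only if there exists a partition (S_1, S_2) of [n] with Σ_{j∈S_1} a_j = Σ_{j∈S_2} a_j = T. -/

import Mathlib

/-!
A special item `inr e` is worth more in dimension `e` than all ordinary items together. So after
removing at most one item from the other bundle, no special item may remain there, which forces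
each agent to own exactly one special item and the removed item to be the other agent's one. What
is left of the envy condition then compares the ordinary items alone, in both directions: the two
halves of `[n]` have equal sums.
-/

/-- An allocation: a partition of the set of items among `n` agents. -/
def IsAllocation {n : ℕ} {Item : Type*} [DecidableEq Item]
    (A : Fin n → Finset Item) : Prop :=
  (∀ g : Item, ∃ i : Fin n, g ∈ A i) ∧
  ∀ i i' : Fin n, i ≠ i' → Disjoint (A i) (A i')

/-- Weak simultaneous envy-freeness up to `c` goods: for every pair of distinct
agents and every dimension, envy in that dimension can be eliminated by removing
at most `c` items (possibly different ones per dimension). -/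
def WeakSEF {n : ℕ} {Item Dim : Type*} [DecidableEq Item]
    (v : Fin n → Item → Dim → ℕ) (A : Fin n → Finset Item) (c : ℕ) : Prop :=
  ∀ i i' : Fin n, i ≠ i' → ∀ k : Dim,
    ∃ X : Finset Item, X ⊆ A i' ∧ X.card ≤ c ∧
      ∑ g ∈ A i' \ X, v i g k ≤ ∑ g ∈ A i, v i g k

/-- Strong simultaneous envy-freeness up to `c` goods: for every pair of distinct
agents there is a single set of at most `c` items whose removal eliminates envy
simultaneously in every dimension. -/
def StrongSEF {n : ℕ} {Item Dim : Type*} [DecidableEq Item]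
    (v : Fin n → Item → Dim → ℕ) (A : Fin n → Finset Item) (c : ℕ) : Prop :=
  ∀ i i' : Fin n, i ≠ i' → ∃ X : Finset Item, X ⊆ A i' ∧ X.card ≤ c ∧
    ∀ k : Dim, ∑ g ∈ A i' \ X, v i g k ≤ ∑ g ∈ A i, v i g k

open Finset Sum

theorem Finset.compl_disjSum {α β : Type*} [Fintype α] [Fintype β] [DecidableEq α]
    [DecidableEq β] (s : Finset α) (t : Finset β) : (s.disjSum t)ᶜ = sᶜ.disjSum tᶜ := by
  ext (x | x) <;> simp

theorem Finset.toLeft_compl {α β : Type*} [Fintype α] [Fintype β] [DecidableEq α]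
    [DecidableEq β] (u : Finset (α ⊕ β)) : uᶜ.toLeft = u.toLeftᶜ := by
  ext; simp

section TwoAgents

variable {Item Dim : Type*} [DecidableEq Item]

def EnvyFreeUpTo (u : Item → Dim → ℕ) (B C : Finset Item) (c : ℕ) : Prop :=
  ∃ X ⊆ C, X.card ≤ c ∧ ∀ k, ∑ g ∈ C \ X, u g k ≤ ∑ g ∈ B, u g k

theorem isAllocation_fin_two_iff [Fintype Item] (A : Fin 2 → Finset Item) :
    IsAllocation A ↔ A 1 = (A 0)ᶜ := by
  constructor
  · rintro ⟨hcover, hdisj⟩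
    ext g
    obtain ⟨i, hi⟩ := hcover g
    have h01 : g ∈ A 0 → g ∉ A 1 := fun h => disjoint_left.1 (hdisj 0 1 (by decide)) h
    fin_cases i <;> simp_all
  · intro h
    refine ⟨fun g => ?_, fun i i' hii' => ?_⟩
    · by_cases hg : g ∈ A 0
      · exact ⟨0, hg⟩
      · exact ⟨1, by simpa [h]⟩
    · fin_cases i <;> fin_cases i' <;> simp_all [disjoint_compl_right, disjoint_compl_left]

theorem strongSEF_fin_two_iff (v : Fin 2 → Item → Dim → ℕ) (A : Fin 2 → Finset Item) (c : ℕ) :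
    StrongSEF v A c ↔ EnvyFreeUpTo (v 0) (A 0) (A 1) c ∧ EnvyFreeUpTo (v 1) (A 1) (A 0) c := by
  refine ⟨fun h => ⟨h 0 1 (by decide), h 1 0 (by decide)⟩, fun ⟨h₀₁, h₁₀⟩ i i' hii' => ?_⟩
  fin_cases i <;> fin_cases i' <;> first | exact absurd rfl hii' | assumption

theorem exists_allocation_strongSEF_fin_two_iff [Fintype Item] (u : Item → Dim → ℕ) (c : ℕ) :
    (∃ A : Fin 2 → Finset Item, IsAllocation A ∧ StrongSEF (fun _ => u) A c) ↔
      ∃ B : Finset Item, EnvyFreeUpTo u B Bᶜ c ∧ EnvyFreeUpTo u Bᶜ B c := by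
  simp only [isAllocation_fin_two_iff, strongSEF_fin_two_iff]
  constructor
  · rintro ⟨A, hA, h⟩
    exact ⟨A 0, by simpa [hA] using h⟩
  · rintro ⟨B, h⟩
    exact ⟨![B, Bᶜ], rfl, h⟩

end TwoAgents

namespace PartitionReduction

variable {ι : Type*} [DecidableEq ι] (a : ι → ℕ) (b : ℕ)

def valuation (g : ι ⊕ Fin 2) (k : Fin 2) : ℕ :=
  Sum.elim (fun j => a j) (fun e => ![![b, 0], ![0, b]] e k) g

theorem sum_valuation (B : Finset (ι ⊕ Fin 2)) (k : Fin 2) :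
    ∑ g ∈ B, valuation a b g k = ∑ j ∈ B.toLeft, a j + if inr k ∈ B then b else 0 := by
  have hspecial : ∀ e, ![![b, 0], ![0, b]] e k = if e = k then b else 0 := by
    intro e; fin_cases e <;> fin_cases k <;> rfl
  rw [sum_sum_eq_sum_toLeft_add_sum_toRight]
  simp [valuation, hspecial, sum_ite_eq']

theorem envyFreeUpTo_disjSum_singleton {S S' : Finset ι} (h : ∑ j ∈ S', a j ≤ ∑ j ∈ S, a j)
    (e e' : Fin 2) : EnvyFreeUpTo (valuation a b) (S.disjSum {e}) (S'.disjSum {e'}) 1 := by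
  refine ⟨{inr e'}, by simp, by simp, fun k => ?_⟩
  have hleft : (S'.disjSum {e'} \ {inr e'}).toLeft = S' := by ext; simp
  rw [sum_valuation, sum_valuation, if_neg (by simp), hleft, toLeft_disjSum]
  omega

variable [Fintype ι] {a b}

theorem inr_mem_of_forall_sum_sdiff_le (hb : ∑ j, a j < b) {B C X : Finset (ι ⊕ Fin 2)}
    (hBC : Disjoint B C) (hX : ∀ k, ∑ g ∈ C \ X, valuation a b g k ≤ ∑ g ∈ B, valuation a b g k)
    {k : Fin 2} (hk : inr k ∈ C) : inr k ∈ X := by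
  by_contra hkX
  have hB : ∑ j ∈ B.toLeft, a j ≤ ∑ j, a j := sum_le_univ_sum_of_nonneg fun _ => Nat.zero_le _
  have := hX k
  rw [sum_valuation, sum_valuation, if_pos (mem_sdiff.2 ⟨hk, hkX⟩),
    if_neg (disjoint_right.1 hBC hk)] at this
  omega

theorem exists_inr_mem_of_envyFreeUpTo_compl (hb : ∑ j, a j < b) {B : Finset (ι ⊕ Fin 2)}
    (h : EnvyFreeUpTo (valuation a b) B Bᶜ 1) : ∃ k, inr k ∈ B := by
  by_contra! hB
  obtain ⟨X, -, hcard, hX⟩ := h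
  have hmem k : inr k ∈ X :=
    inr_mem_of_forall_sum_sdiff_le hb disjoint_compl_right hX (mem_compl.2 (hB k))
  have hpair := card_le_card (show {inr 0, inr 1} ⊆ X by simp [insert_subset_iff, hmem])
  rw [card_pair (by simp)] at hpair
  omega

theorem sum_toLeft_le_of_envyFreeUpTo (hb : ∑ j, a j < b) {B C : Finset (ι ⊕ Fin 2)}
    (hBC : Disjoint B C) (h : EnvyFreeUpTo (valuation a b) B C 1) {k : Fin 2} (hk : inr k ∈ C) :
    ∑ j ∈ C.toLeft, a j ≤ ∑ j ∈ B.toLeft, a j := by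
  obtain ⟨X, -, hcard, hX⟩ := h
  have hXk : X = {inr k} :=
    eq_singleton_iff_unique_mem.2 ⟨inr_mem_of_forall_sum_sdiff_le hb hBC hX hk,
      fun g hg => card_le_one.1 hcard g hg _ (inr_mem_of_forall_sum_sdiff_le hb hBC hX hk)⟩
  have hleft : (C \ X).toLeft = C.toLeft := by ext; simp [hXk]
  have := hX k
  rwa [sum_valuation, sum_valuation, if_neg (by simp [hXk]), if_neg (disjoint_right.1 hBC hk),
    hleft, add_zero, add_zero] at this

theorem sum_toLeft_eq_sum_compl (hb : ∑ j, a j < b) {B : Finset (ι ⊕ Fin 2)}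
    (h₁ : EnvyFreeUpTo (valuation a b) B Bᶜ 1) (h₂ : EnvyFreeUpTo (valuation a b) Bᶜ B 1) :
    ∑ j ∈ B.toLeft, a j = ∑ j ∈ B.toLeftᶜ, a j := by
  obtain ⟨k, hk⟩ := exists_inr_mem_of_envyFreeUpTo_compl hb h₁
  obtain ⟨k', hk'⟩ := exists_inr_mem_of_envyFreeUpTo_compl hb (by rwa [compl_compl])
  rw [← toLeft_compl]
  exact le_antisymm (sum_toLeft_le_of_envyFreeUpTo hb disjoint_compl_left h₂ hk)
    (sum_toLeft_le_of_envyFreeUpTo hb disjoint_compl_right h₁ hk')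

end PartitionReduction

theorem strong_sEF1_iff_partition_general (n T : ℕ) (a : Fin n → ℕ)
    (hsum : ∑ j, a j = 2 * T) :
    (∃ A : Fin 2 → Finset (Fin n ⊕ Fin 2), IsAllocation A ∧
        StrongSEF (fun (_ : Fin 2) (g : Fin n ⊕ Fin 2) (k : Fin 2) =>
          Sum.elim (fun j => a j)
            (fun e => ![![2 * T + 1, 0], ![0, 2 * T + 1]] e k) g) A 1) ↔
      ∃ S : Finset (Fin n), ∑ j ∈ S, a j = T ∧ ∑ j ∈ Sᶜ, a j = T := by
  refine (exists_allocation_strongSEF_fin_two_iff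
    (PartitionReduction.valuation a (2 * T + 1)) 1).trans ?_
  constructor
  · rintro ⟨B, h₁, h₂⟩
    have hbalanced := PartitionReduction.sum_toLeft_eq_sum_compl (by omega) h₁ h₂
    have htotal := sum_add_sum_compl B.toLeft a
    exact ⟨B.toLeft, by omega, by omega⟩
  · rintro ⟨S, hS, hSc⟩
    have hcompl : (S.disjSum {0} : Finset (Fin n ⊕ Fin 2))ᶜ = Sᶜ.disjSum {1} := by
      rw [compl_disjSum, show ({0}ᶜ : Finset (Fin 2)) = {1} by decide]
    refine ⟨S.disjSum {0}, ?_, ?_⟩ <;> rw [hcompl] <;>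
      exact PartitionReduction.envyFreeUpTo_disjSum_singleton _ _ (by omega) _ _

/-- Correctness of the reduction from PARTITION to strong sEF1
existence: for positive integers `a 0, …, a (n-1)` with total sum `2T`, the
two-identical-agent instance with items `Fin n ⊕ Fin 2`, two dimensions, and
valuations `v gⱼ = (aⱼ, aⱼ)`, `v g_{n+1} = (2T+1, 0)`, `v g_{n+2} = (0, 2T+1)`
admits a strong sEF1 allocation iff `[n]` can be partitioned into two parts each
summing to `T`. -/
theorem strong_sEF1_iff_partition (n T : ℕ) (a : Fin n → ℕ) (ha : ∀ j, 0 < a j)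
    (hsum : ∑ j, a j = 2 * T) :
    (∃ A : Fin 2 → Finset (Fin n ⊕ Fin 2), IsAllocation A ∧
        StrongSEF (fun (_ : Fin 2) (g : Fin n ⊕ Fin 2) (k : Fin 2) =>
          Sum.elim (fun j => a j)
            (fun e => ![![2 * T + 1, 0], ![0, 2 * T + 1]] e k) g) A 1) ↔
      ∃ S : Finset (Fin n), ∑ j ∈ S, a j = T ∧ ∑ j ∈ Sᶜ, a j = T :=
  strong_sEF1_iff_partition_general n T a hsum
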